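/- Let S be the 4×4 real matrix with rows (1,2,1,2), (1,1,1,1), (1,2,-1,-2), (1,1,-1,-1) (i.e., S = H_2 ⊗ T with H_2 = [[1,1],[1,-1]], T = [[1,2],[1,1]]). Then S is invertible, S is not a Perron similarity, yet there exists x ∈ ℝ^4 not a nonnegative multiple of the all-ones vector such that S D_x S^{-1} ≥ 0 (e.g., x = (2,2,-1,-1) yields a nonnegative nonscalar matrix). Hence the cone 𝒞(S) properly contains coni(e) while S is not a Perron similarity. -/

import Mathlib

/-!
Write `S = H ⊗ T` with `H = [[1,1],[1,-1]]` and `T = [[1,2],[1,1]]`. Columns `2, 3` of `S` and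
rows `0, 1` of `S⁻¹ = H⁻¹ ⊗ T⁻¹` all change sign, so `S` is not a Perron similarity. On the other
hand `x = (2,2,-1,-1)` gives `D_x = diag(2,-1) ⊗ I`, hence
`S D_x S⁻¹ = (H diag(2,-1) H⁻¹) ⊗ I = [[1/2,3/2],[3/2,1/2]] ⊗ I ≥ 0`.
-/

/-- A real invertible matrix is a Perron similarity if one of its columns and the
corresponding row of its inverse are both nonnegative or both nonpositive. -/
def IsPerronSimilarity {n : ℕ} (S : Matrix (Fin n) (Fin n) ℝ) : Prop :=
  IsUnit S.det ∧ ∃ i,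
    ((∀ r, 0 ≤ S r i) ∧ (∀ c, 0 ≤ S⁻¹ i c)) ∨
    ((∀ r, S r i ≤ 0) ∧ (∀ c, S⁻¹ i c ≤ 0))

theorem not_isPerronSimilarity_of_forall_sign_change {n : ℕ} (S : Matrix (Fin n) (Fin n) ℝ)
    (h : ∀ i, (∃ r r', S r i < 0 ∧ 0 < S r' i) ∨ (∃ c c', S⁻¹ i c < 0 ∧ 0 < S⁻¹ i c')) :
    ¬IsPerronSimilarity S := by
  rintro ⟨-, i, ⟨hcol, hrow⟩ | ⟨hcol, hrow⟩⟩ <;>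
    rcases h i with ⟨r, r', hr, hr'⟩ | ⟨c, c', hc, hc'⟩
  · linarith [hcol r]
  · linarith [hrow c]
  · linarith [hcol r']
  · linarith [hrow c']

namespace JohnsonPaparella

open Matrix

noncomputable def S : Matrix (Fin 4) (Fin 4) ℝ :=
  !![1, 2, 1, 2; 1, 1, 1, 1; 1, 2, -1, -2; 1, 1, -1, -1]

noncomputable def SInv : Matrix (Fin 4) (Fin 4) ℝ :=
  !![-1/2, 1, -1/2, 1; 1/2, -1/2, 1/2, -1/2; -1/2, 1, 1/2, -1; 1/2, -1/2, -1/2, 1/2]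

theorem S_mul_SInv : S * SInv = 1 := by
  ext i j
  fin_cases i <;> fin_cases j <;>
    simp [S, SInv, mul_apply, Fin.sum_univ_four, one_apply] <;> norm_num

theorem inv_S : S⁻¹ = SInv := inv_eq_right_inv S_mul_SInv

theorem isUnit_det_S : IsUnit S.det := isUnit_det_of_right_inverse S_mul_SInv

theorem not_isPerronSimilarity_S : ¬IsPerronSimilarity S := by
  refine not_isPerronSimilarity_of_forall_sign_change S fun i => ?_
  rw [inv_S]
  fin_cases i
  · exact .inr ⟨0, 1, by norm_num [SInv], by norm_num [SInv]⟩
  · exact .inr ⟨1, 0, by norm_num [SInv], by norm_num [SInv]⟩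
  · exact .inl ⟨2, 0, by simp [S], by simp [S]⟩
  · exact .inl ⟨2, 0, by simp [S], by simp [S]⟩

theorem S_mul_diagonal_mul_inv :
    S * diagonal ![2, 2, -1, -1] * S⁻¹ =
      !![1/2, 0, 3/2, 0; 0, 1/2, 0, 3/2; 3/2, 0, 1/2, 0; 0, 3/2, 0, 1/2] := by
  rw [inv_S]
  ext i j
  simp only [mul_apply, diagonal_apply, Fin.sum_univ_four]
  fin_cases i <;> fin_cases j <;> simp [S, SInv] <;> norm_num

end JohnsonPaparella

/-- The matrix `S = H₂ ⊗ [[1,2],[1,1]]` is invertible and not a Perron similarity,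
yet there exists `x` (e.g. `x = (2,2,-1,-1)`) that is not a nonnegative multiple of
the all-ones vector with `S D_x S⁻¹ ≥ 0`; hence `𝒞(S)` properly contains `coni(e)`
while `S` is not a Perron similarity, refuting Corollary 3.17 of Johnson–Paparella. -/
theorem counterexample_JP_cor_3_17 :
    letI S : Matrix (Fin 4) (Fin 4) ℝ :=
      !![1, 2, 1, 2; 1, 1, 1, 1; 1, 2, -1, -2; 1, 1, -1, -1]
    IsUnit S.det ∧ ¬IsPerronSimilarity S ∧
      ∃ x : Fin 4 → ℝ,
        (∀ i j, 0 ≤ (S * Matrix.diagonal x * S⁻¹) i j) ∧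
        ∀ α : ℝ, 0 ≤ α → x ≠ fun _ : Fin 4 => α := by
  open JohnsonPaparella in
  change IsUnit S.det ∧ ¬IsPerronSimilarity S ∧ ∃ x : Fin 4 → ℝ,
    (∀ i j, 0 ≤ (S * Matrix.diagonal x * S⁻¹) i j) ∧ ∀ α : ℝ, 0 ≤ α → x ≠ fun _ => α
  refine ⟨JohnsonPaparella.isUnit_det_S, JohnsonPaparella.not_isPerronSimilarity_S,
    ![2, 2, -1, -1], ?_, ?_⟩
  · rw [JohnsonPaparella.S_mul_diagonal_mul_inv]
    intro i j
    fin_cases i <;> fin_cases j <;> norm_num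
  · intro α _ hx
    have h0 := congrFun hx 0
    have h2 := congrFun hx 2
    simp at h0 h2
    linarith
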